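/- arXiv:2602.16857 — 2 statements merged into one kernel-verified Lean document; each statement's English description precedes it below -/
import Mathlib

section
/- Let D ≥ 2, x : Fin D → ℝ, x̄ = (∑ x_j)/D, and W_d(ε) = exp(-x_d/ε) / ∑_j exp(-x_j/ε). Then for each d, ε · (W_d(ε) - 1/D) tends to (x̄ - x_d)/D as ε → ∞. -/
/-!
Writing `e_j(ε) = exp (-x_j / ε)` and `S = ∑ e_j`, one has
`ε (e_d / S - 1 / D) = (ε (e_d - 1) - (1 / D) ∑_j ε (e_j - 1)) / S`.
As `ε → ∞`, `S → D` and each `ε (e_j - 1) → -x_j`, the derivative of `t ↦ exp (-x_j t)` at `0`,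
so the right-hand side tends to `(x̄ - x_d) / D`.
-/

open Filter Topology Finset

theorem HasDerivAt.tendsto_mul_sub_inv_atTop {f : ℝ → ℝ} {f' : ℝ} (hf : HasDerivAt f f' 0) :
    Tendsto (fun ε => ε * (f ε⁻¹ - f 0)) atTop (𝓝 f') := by
  simpa [Function.comp_def] using hf.tendsto_slope_zero_right.comp tendsto_inv_atTop_nhdsGT_zero

theorem Real.tendsto_mul_exp_div_sub_one (c : ℝ) :
    Tendsto (fun ε => ε * (Real.exp (c / ε) - 1)) atTop (𝓝 c) := by
  have hderiv : HasDerivAt (fun t => Real.exp (c * t)) c 0 := by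
    simpa using ((hasDerivAt_id (0 : ℝ)).const_mul c).exp
  simpa [div_eq_mul_inv] using hderiv.tendsto_mul_sub_inv_atTop

theorem Real.tendsto_exp_div_atTop_one (c : ℝ) :
    Tendsto (fun ε => Real.exp (c / ε)) atTop (𝓝 1) := by
  simpa [Function.comp_def] using
    (Real.continuous_exp.tendsto 0).comp (tendsto_const_nhds.div_atTop tendsto_id)

theorem softmax_sub_inv_card_eq {ι : Type*} [Fintype ι] (e : ι → ℝ) (hS : ∑ j, e j ≠ 0)
    (ε : ℝ) (i : ι) :
    ε * (e i / ∑ j, e j - 1 / Fintype.card ι) =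
      (ε * (e i - 1) - (∑ j, ε * (e j - 1)) / Fintype.card ι) / ∑ j, e j := by
  have hn : (Fintype.card ι : ℝ) ≠ 0 := by
    contrapose! hS
    have : IsEmpty ι := Fintype.card_eq_zero_iff.mp (by exact_mod_cast hS)
    simp
  rw [← mul_sum, sum_sub_distrib, sum_const, card_univ, nsmul_one]
  field_simp
  ring

theorem tendsto_mul_softmax_sub_inv_card {ι : Type*} [Fintype ι] [Nonempty ι] (x : ι → ℝ)
    (i : ι) :
    Tendsto (fun ε => ε * (Real.exp (-x i / ε) / ∑ j, Real.exp (-x j / ε) - 1 / Fintype.card ι))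
      atTop (𝓝 (((∑ j, x j) / Fintype.card ι - x i) / Fintype.card ι)) := by
  have hcard : (Fintype.card ι : ℝ) ≠ 0 := Nat.cast_ne_zero.mpr Fintype.card_ne_zero
  have hsum : Tendsto (fun ε => ∑ j, Real.exp (-x j / ε)) atTop (𝓝 (Fintype.card ι)) := by
    simpa using tendsto_finsetSum univ fun j _ => Real.tendsto_exp_div_atTop_one (-x j)
  have hcentered : Tendsto (fun ε => ε * (Real.exp (-x i / ε) - 1) -
        (∑ j, ε * (Real.exp (-x j / ε) - 1)) / Fintype.card ι)
      atTop (𝓝 (-x i - (∑ j, -x j) / Fintype.card ι)) :=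
    (Real.tendsto_mul_exp_div_sub_one _).sub <| (tendsto_finsetSum univ fun j _ =>
      Real.tendsto_mul_exp_div_sub_one (-x j)).div_const _
  convert hcentered.div hsum hcard using 1
  · ext ε
    have hS : 0 < ∑ j, Real.exp (-x j / ε) := sum_pos (fun j _ => Real.exp_pos _) univ_nonempty
    exact softmax_sub_inv_card_eq (fun j => Real.exp (-x j / ε)) hS.ne' ε i
  · rw [sum_neg_distrib]
    congr 1
    ring

theorem softmax_first_order_general (D : ℕ) (x : Fin D → ℝ)
    (xbar : ℝ) (hxbar : xbar = (∑ j, x j) / D)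
    (W : Fin D → ℝ → ℝ)
    (hW : ∀ d ε, W d ε = Real.exp (-x d / ε) / ∑ j, Real.exp (-x j / ε))
    (d : Fin D) :
    Tendsto (fun ε => ε * (W d ε - 1 / D)) atTop (𝓝 ((xbar - x d) / D)) := by
  have : Nonempty (Fin D) := ⟨d⟩
  simp only [hW, hxbar]
  simpa using tendsto_mul_softmax_sub_inv_card x d

theorem softmax_first_order (D : ℕ) (hD : 2 ≤ D) (x : Fin D → ℝ)
    (xbar : ℝ) (hxbar : xbar = (∑ j, x j) / D)
    (W : Fin D → ℝ → ℝ)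
    (hW : ∀ d ε, W d ε = Real.exp (-x d / ε) / ∑ j, Real.exp (-x j / ε))
    (d : Fin D) :
    Tendsto (fun ε => ε * (W d ε - 1 / D)) atTop (𝓝 ((xbar - x d) / D)) :=
  softmax_first_order_general D x xbar hxbar W hW d
end

section
/- Let D ≥ 2, x : Fin D → ℝ with x̄ = (∑ x_j)/D, and suppose x_d ≠ x̄ for a given index d. With W_d(ε) = exp(-x_d/ε)/∑_j exp(-x_j/ε), the indicator 1{W_d(ε) > 1/D} equals 1{x_d < x̄} for all sufficiently large ε. -/
/-!
Put `t = 1 / ε`. Then `W_d(ε) > 1 / D` exactly when `g t < D = g 0`, where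
`g t = ∑ j, exp ((x_d - x_j) t)`. Since `g' 0 = D (x_d - x̄) ≠ 0`, for small `t > 0` the sign
of `g t - g 0` is the sign of `g' 0`, and `ε → ∞` corresponds to `t → 0⁺`.
-/

open Filter Topology

theorem HasDerivAt.eventually_nhdsGT_lt_iff {f : ℝ → ℝ} {f' a : ℝ} (hf : HasDerivAt f f' a)
    (hf' : f' ≠ 0) : ∀ᶠ t in 𝓝[>] a, (f t < f a ↔ f' < 0) := by
  have hslope : Tendsto (slope f a) (𝓝[>] a) (𝓝 f') :=
    (hasDerivAt_iff_tendsto_slope.mp hf).mono_left (nhdsGT_le_nhdsNE a)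
  have hsign : ∀ᶠ s in 𝓝 f', (s < 0 ↔ f' < 0) := by
    rcases hf'.lt_or_gt with h | h
    · filter_upwards [eventually_lt_nhds h] with s hs
      exact iff_of_true hs h
    · filter_upwards [eventually_gt_nhds h] with s hs
      exact iff_of_false hs.not_gt h.not_gt
  filter_upwards [hslope.eventually hsign, self_mem_nhdsWithin] with t ht (hat : a < t)
  rw [← ht, slope_def_field, div_lt_iff₀ (sub_pos.mpr hat), zero_mul, sub_neg]

section Softmax

open Real

variable {ι : Type*} [Fintype ι] (x : ι → ℝ) (i : ι)

theorem one_div_card_lt_softmax_iff (ε : ℝ) :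
    1 / Fintype.card ι < exp (-x i / ε) / ∑ j, exp (-x j / ε) ↔
      ∑ j, exp ((x i - x j) / ε) < Fintype.card ι := by
  have hcard : (0 : ℝ) < Fintype.card ι := Nat.cast_pos.mpr (Fintype.card_pos_iff.mpr ⟨i⟩)
  have hsum : 0 < ∑ j, exp (-x j / ε) :=
    Finset.sum_pos (fun j _ => exp_pos _) ⟨i, Finset.mem_univ i⟩
  have hshift : ∑ j, exp ((x i - x j) / ε) = (∑ j, exp (-x j / ε)) / exp (-x i / ε) := by
    rw [Finset.sum_div]
    refine Finset.sum_congr rfl fun j _ => ?_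
    rw [← exp_sub]
    ring_nf
  rw [hshift, div_lt_div_iff₀ hcard hsum, div_lt_iff₀ (exp_pos _), one_mul, mul_comm]

theorem hasDerivAt_sum_exp_sub_mul :
    HasDerivAt (fun t => ∑ j, exp ((x i - x j) * t)) (∑ j, (x i - x j)) 0 := by
  refine HasDerivAt.fun_sum fun j _ => ?_
  simpa using ((hasDerivAt_id (0 : ℝ)).const_mul (x i - x j)).exp

theorem sum_sub_eq_card_mul_sub_mean :
    ∑ j, (x i - x j) = Fintype.card ι * (x i - (∑ j, x j) / Fintype.card ι) := by
  have hcard : (Fintype.card ι : ℝ) ≠ 0 :=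
    Nat.cast_ne_zero.mpr (Fintype.card_pos_iff.mpr ⟨i⟩).ne'
  rw [Finset.sum_sub_distrib, Finset.sum_const, Finset.card_univ, nsmul_eq_mul, mul_sub,
    mul_div_cancel₀ _ hcard]

end Softmax

theorem softmax_indicator_eventually_general (D : ℕ) (x : Fin D → ℝ)
    (xbar : ℝ) (hxbar : xbar = (∑ j, x j) / D)
    (W : Fin D → ℝ → ℝ)
    (hW : ∀ d ε, W d ε = Real.exp (-x d / ε) / ∑ j, Real.exp (-x j / ε))
    (d : Fin D) (hne : x d ≠ xbar) :
    ∀ᶠ ε in atTop, (if W d ε > 1 / D then (1 : ℝ) else 0) =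
      (if x d < xbar then (1 : ℝ) else 0) := by
  have hD : (0 : ℝ) < D := Nat.cast_pos.mpr d.pos
  have hderiv := hasDerivAt_sum_exp_sub_mul x d
  rw [sum_sub_eq_card_mul_sub_mean, Fintype.card_fin, ← hxbar] at hderiv
  have hsign := hderiv.eventually_nhdsGT_lt_iff (mul_ne_zero hD.ne' (sub_ne_zero.mpr hne))
  simp only [mul_zero, Real.exp_zero, Finset.sum_const, Finset.card_univ, Fintype.card_fin,
    nsmul_eq_mul, mul_one] at hsign
  have hmean : (D : ℝ) * (x d - xbar) < 0 ↔ x d < xbar := by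
    rw [← mul_zero (D : ℝ), mul_lt_mul_iff_of_pos_left hD, sub_neg]
  filter_upwards [tendsto_inv_atTop_nhdsGT_zero.eventually hsign] with ε hε
  have hsoftmax := one_div_card_lt_softmax_iff x d ε
  rw [Fintype.card_fin] at hsoftmax
  refine if_congr ?_ rfl rfl
  rw [hW, gt_iff_lt, hsoftmax, ← hmean, ← hε]
  simp only [div_eq_mul_inv]

theorem softmax_indicator_eventually (D : ℕ) (hD : 2 ≤ D) (x : Fin D → ℝ)
    (xbar : ℝ) (hxbar : xbar = (∑ j, x j) / D)
    (W : Fin D → ℝ → ℝ)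
    (hW : ∀ d ε, W d ε = Real.exp (-x d / ε) / ∑ j, Real.exp (-x j / ε))
    (d : Fin D) (hne : x d ≠ xbar) :
    ∀ᶠ ε in atTop, (if W d ε > 1 / D then (1 : ℝ) else 0) =
      (if x d < xbar then (1 : ℝ) else 0) :=
  softmax_indicator_eventually_general D x xbar hxbar W hW d hne
end
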